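/- arXiv:1404.2688 — 4 statements merged into one kernel-verified Lean document; each statement's English description precedes it below -/
import Mathlib

section
/- Let 1 < q ≤ p < ∞ and f ∈ M^p_q(ℝⁿ). For any measurable set E ⊆ ℝⁿ, ∫_E |f(x)| dx ≤ H^{1/p'}_∞(E) · ‖f‖_{M^p_q}, where H^{1/p'}_∞ is the Hausdorff content of dimension parameter 1/p'. -/
/-!
On a single cube `Q`, Hölder's inequality gives
`∫_Q |f| ≤ |Q|^{1-1/q} (∫_Q |f|^q)^{1/q} = |Q|^{1/p'} · |Q|^{1/p-1/q} (∫_Q |f|^q)^{1/q} ≤ |Q|^{1/p'} ‖f‖_{M^p_q}`.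
Summing this over any countable cover of `E` by open cubes and taking the infimum over covers
gives the bound by the Hausdorff content.
-/

open MeasureTheory ENNReal Set Filter

/-- The open axis-parallel cube with corner `a` and side length `s`. -/
noncomputable def cube (n : ℕ) (a : Fin n → ℝ) (s : ℝ) : Set (Fin n → ℝ) :=
  Set.univ.pi fun i => Set.Ioo (a i) (a i + s)

/-- The Morrey norm `‖f‖_{M^p_q}` on `ℝⁿ`. -/
noncomputable def morreyNorm (n : ℕ) (p q : ℝ) (f : (Fin n → ℝ) → ℝ) : ℝ≥0∞ :=
  ⨆ (a : Fin n → ℝ) (s : ℝ) (_ : 0 < s),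
    ENNReal.ofReal ((s ^ n) ^ (1 / p - 1 / q)) *
      (∫⁻ x in cube n a s, ENNReal.ofReal (|f x| ^ q)) ^ (1 / q)

/-- The Hölder conjugate exponent `p' = p/(p-1)`. -/
noncomputable def conjExp (p : ℝ) : ℝ := p / (p - 1)

/-- A `(p',q')`-block: a measurable function supported on a cube `Q` with
`‖b‖_{L^{q'}} ≤ |Q|^{1/p-1/q}`. -/
def IsBlock (n : ℕ) (p q : ℝ) (b : (Fin n → ℝ) → ℝ) : Prop :=
  Measurable b ∧ ∃ (a : Fin n → ℝ) (s : ℝ), 0 < s ∧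
    Function.support b ⊆ cube n a s ∧
    (∫⁻ x, ENNReal.ofReal (|b x| ^ conjExp q)) ^ (1 / conjExp q) ≤
      ENNReal.ofReal ((s ^ n) ^ (1 / p - 1 / q))

/-- `f = ∑ₖ λₖ bₖ` a.e. with absolutely convergent coefficients and `(p',q')`-blocks. -/
def IsBlockRep (n : ℕ) (p q : ℝ) (f : (Fin n → ℝ) → ℝ) (l : ℕ → ℝ)
    (b : ℕ → (Fin n → ℝ) → ℝ) : Prop :=
  (∀ k, IsBlock n p q (b k)) ∧ Summable (fun k => |l k|) ∧
    ∀ᵐ x : Fin n → ℝ, Summable (fun k => l k * b k x) ∧ f x = ∑' k, l k * b k x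

/-- Membership in the block space `B^{p'}_{q'}(ℝⁿ)`. -/
def MemBlockSpace (n : ℕ) (p q : ℝ) (f : (Fin n → ℝ) → ℝ) : Prop :=
  ∃ l b, IsBlockRep n p q f l b

/-- The block space norm `‖f‖_{B^{p'}_{q'}}`: infimal `ℓ¹`-sum of coefficients. -/
noncomputable def blockNorm (n : ℕ) (p q : ℝ) (f : (Fin n → ℝ) → ℝ) : ℝ≥0∞ :=
  ⨅ (l : ℕ → ℝ) (b : ℕ → (Fin n → ℝ) → ℝ) (_ : IsBlockRep n p q f l b),
    ENNReal.ofReal (∑' k, |l k|)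

/-- The Hausdorff content H^d_∞ of a set: infimal Σ |Q_j|^d over countable covers by
open cubes. -/
noncomputable def hausdorffContent (n : ℕ) (d : ℝ) (E : Set (Fin n → ℝ)) : ℝ≥0∞ :=
  ⨅ (a : ℕ → Fin n → ℝ) (s : ℕ → ℝ) (_ : ∀ j, 0 < s j)
    (_ : E ⊆ ⋃ j, cube n (a j) (s j)),
    ∑' j, ENNReal.ofReal ((s j ^ n) ^ d)

lemma volume_cube (n : ℕ) (a : Fin n → ℝ) {s : ℝ} (hs : 0 ≤ s) :
    volume (cube n a s) = ENNReal.ofReal (s ^ n) := by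
  rw [cube, volume_pi_pi]
  simp [Real.volume_Ioo, ENNReal.ofReal_pow hs]

lemma univ_subset_iUnion_cube (n : ℕ) :
    (univ : Set (Fin n → ℝ)) ⊆ ⋃ m : ℕ, cube n (fun _ => -(m + 1 : ℝ)) (2 * (m + 1)) := by
  intro x _
  obtain ⟨m, hm⟩ := exists_nat_gt ‖x‖
  refine mem_iUnion.mpr ⟨m, fun i _ => ?_⟩
  have hxi : |x i| < m + 1 := ((norm_le_pi_norm x i).trans hm.le).trans_lt (by linarith)
  rw [abs_lt] at hxi
  constructor <;> linarith

lemma lintegral_le_measure_univ_rpow_mul {α : Type*} [MeasurableSpace α] {μ : Measure α}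
    {q : ℝ} (hq : 1 < q) {g : α → ℝ≥0∞} (hg : AEMeasurable g μ) :
    ∫⁻ x, g x ∂μ ≤ μ univ ^ (1 - 1 / q) * (∫⁻ x, g x ^ q ∂μ) ^ (1 / q) := by
  have hpq : q.HolderConjugate q.conjExponent := .conjExponent hq
  have h_exp : 1 / q.conjExponent = 1 - 1 / q := by
    rw [one_div, one_div, ← hpq.inv_add_inv_eq_one]; ring
  simpa [h_exp, mul_comm] using
    ENNReal.lintegral_mul_le_Lp_mul_Lq μ hpq hg (aemeasurable_const (b := (1 : ℝ≥0∞)))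

lemma le_morreyNorm (n : ℕ) (p q : ℝ) (f : (Fin n → ℝ) → ℝ) (a : Fin n → ℝ) {s : ℝ}
    (hs : 0 < s) :
    ENNReal.ofReal ((s ^ n) ^ (1 / p - 1 / q)) *
      (∫⁻ x in cube n a s, ENNReal.ofReal (|f x| ^ q)) ^ (1 / q) ≤ morreyNorm n p q f :=
  le_iSup_of_le a (le_iSup_of_le s (le_iSup_of_le hs le_rfl))

lemma lintegral_cube_le_morreyNorm {n : ℕ} {p q : ℝ} (hq : 1 < q) {f : (Fin n → ℝ) → ℝ}
    (hf : Measurable f) (a : Fin n → ℝ) {s : ℝ} (hs : 0 < s) :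
    ∫⁻ x in cube n a s, ENNReal.ofReal |f x| ≤
      ENNReal.ofReal ((s ^ n) ^ (1 - 1 / p)) * morreyNorm n p q f := by
  have hsn : 0 < s ^ n := pow_pos hs n
  have h_rpow : ∀ x, ENNReal.ofReal |f x| ^ q = ENNReal.ofReal (|f x| ^ q) := fun x =>
    ENNReal.ofReal_rpow_of_nonneg (abs_nonneg _) (by linarith)
  have h_vol : ENNReal.ofReal (s ^ n) ^ (1 - 1 / q) =
      ENNReal.ofReal ((s ^ n) ^ (1 - 1 / p)) * ENNReal.ofReal ((s ^ n) ^ (1 / p - 1 / q)) := by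
    rw [ENNReal.ofReal_rpow_of_pos hsn, ← ENNReal.ofReal_mul (by positivity), ← Real.rpow_add hsn]
    ring_nf
  have holder := lintegral_le_measure_univ_rpow_mul (μ := volume.restrict (cube n a s)) hq
    hf.abs.ennreal_ofReal.aemeasurable
  rw [Measure.restrict_apply_univ, volume_cube n a hs.le, h_vol] at holder
  simp only [h_rpow] at holder
  calc ∫⁻ x in cube n a s, ENNReal.ofReal |f x|
      ≤ _ := holder
    _ = ENNReal.ofReal ((s ^ n) ^ (1 - 1 / p)) * (ENNReal.ofReal ((s ^ n) ^ (1 / p - 1 / q)) *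
          (∫⁻ x in cube n a s, ENNReal.ofReal (|f x| ^ q)) ^ (1 / q)) := mul_assoc _ _ _
    _ ≤ _ := mul_le_mul_right (le_morreyNorm n p q f a hs) _

lemma setLIntegral_le_tsum_mul_of_subset_iUnion_cube {n : ℕ} {d : ℝ} {C : ℝ≥0∞}
    {g : (Fin n → ℝ) → ℝ≥0∞}
    (hg : ∀ a s, 0 < s → ∫⁻ x in cube n a s, g x ≤ ENNReal.ofReal ((s ^ n) ^ d) * C)
    {E : Set (Fin n → ℝ)} {a : ℕ → Fin n → ℝ} {s : ℕ → ℝ} (hs : ∀ j, 0 < s j)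
    (hE : E ⊆ ⋃ j, cube n (a j) (s j)) :
    ∫⁻ x in E, g x ≤ (∑' j, ENNReal.ofReal ((s j ^ n) ^ d)) * C :=
  calc ∫⁻ x in E, g x
      ≤ ∫⁻ x in ⋃ j, cube n (a j) (s j), g x := lintegral_mono_set hE
    _ ≤ ∑' j, ∫⁻ x in cube n (a j) (s j), g x := lintegral_iUnion_le _ _
    _ ≤ ∑' j, ENNReal.ofReal ((s j ^ n) ^ d) * C :=
        ENNReal.tsum_le_tsum fun j => hg (a j) (s j) (hs j)
    _ = (∑' j, ENNReal.ofReal ((s j ^ n) ^ d)) * C := ENNReal.tsum_mul_right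

lemma setLIntegral_le_hausdorffContent_mul {n : ℕ} {d : ℝ} {C : ℝ≥0∞} (hC : C ≠ ⊤)
    {g : (Fin n → ℝ) → ℝ≥0∞}
    (hg : ∀ a s, 0 < s → ∫⁻ x in cube n a s, g x ≤ ENNReal.ofReal ((s ^ n) ^ d) * C)
    (E : Set (Fin n → ℝ)) :
    ∫⁻ x in E, g x ≤ hausdorffContent n d E * C := by
  -- For `C = 0` the infimum cannot be pulled out of the product (over no covers it is `⊤`),
  -- so we use one explicit cover of the whole space.
  rcases eq_or_ne C 0 with rfl | hC0
  · simpa using setLIntegral_le_tsum_mul_of_subset_iUnion_cube hg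
      (fun m => by positivity) ((subset_univ E).trans (univ_subset_iUnion_cube n))
  · simp only [hausdorffContent, ENNReal.iInf_mul_of_ne hC0 hC]
    exact le_iInf₂ fun a s => le_iInf₂ fun hs hE =>
      setLIntegral_le_tsum_mul_of_subset_iUnion_cube hg hs hE

theorem stmt4_general (n : ℕ) (p q : ℝ) (hq : 1 < q)
    (f : (Fin n → ℝ) → ℝ) (hf : Measurable f) (hmem : morreyNorm n p q f < ⊤)
    (E : Set (Fin n → ℝ)) :
    ∫⁻ x in E, ENNReal.ofReal |f x| ≤
      hausdorffContent n (1 - 1 / p) E * morreyNorm n p q f :=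
  setLIntegral_le_hausdorffContent_mul hmem.ne
    (fun a _ hs => lintegral_cube_le_morreyNorm hq hf a hs) E

/-- For 1 < q ≤ p and f ∈ M^p_q, for any set E,
∫_E |f| ≤ H^{1/p'}_∞(E) ‖f‖_{M^p_q}. -/
theorem stmt4 (n : ℕ) (p q : ℝ) (hq : 1 < q) (hqp : q ≤ p)
    (f : (Fin n → ℝ) → ℝ) (hf : Measurable f) (hmem : morreyNorm n p q f < ⊤)
    (E : Set (Fin n → ℝ)) :
    ∫⁻ x in E, ENNReal.ofReal |f x| ≤
      hausdorffContent n (1 - 1 / p) E * morreyNorm n p q f :=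
  stmt4_general n p q hq f hf hmem E
end

section
/- Let 1 < q ≤ p < ∞. If g ∈ M^p_q(ℝⁿ) and f ∈ B^{p'}_{q'}(ℝⁿ), then fg is integrable and |∫_{ℝⁿ} f g dx| ≤ ‖f‖_{B^{p'}_{q'}} ‖g‖_{M^p_q}. -/
open MeasureTheory ENNReal Set Filter

/-!
Each block `b` sits on a cube `Q`, so Hölder's inequality on `Q` bounds `∫ |b g|` by
`‖b‖_{q'} ‖g‖_{L^q(Q)} ≤ |Q|^{1/p-1/q} ‖g‖_{L^q(Q)} ≤ ‖g‖_{M^p_q}`. Summing over a block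
decomposition `f = ∑ λₖ bₖ` gives `∫ |f g| ≤ (∑ |λₖ|) ‖g‖_{M^p_q}`, and taking the infimum over
decompositions gives the claim.
-/

lemma lintegral_enorm_mul_le_of_holderConjugate {α : Type*} [MeasurableSpace α] {μ : Measure α}
    {p q : ℝ} (hpq : p.HolderConjugate q) {f g : α → ℝ} (hf : AEMeasurable f μ)
    (hg : AEMeasurable g μ) :
    ∫⁻ x, ‖f x * g x‖ₑ ∂μ ≤
      (∫⁻ x, ENNReal.ofReal (|f x| ^ p) ∂μ) ^ (1 / p) *
        (∫⁻ x, ENNReal.ofReal (|g x| ^ q) ∂μ) ^ (1 / q) := by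
  have hrpow (r : ℝ) (hr : 0 ≤ r) (y : ℝ) : ENNReal.ofReal (|y| ^ r) = ‖y‖ₑ ^ r := by
    rw [Real.enorm_eq_ofReal_abs, ofReal_rpow_of_nonneg (abs_nonneg y) hr]
  simp_rw [enorm_mul, hrpow p hpq.nonneg, hrpow q hpq.symm.nonneg]
  exact ENNReal.lintegral_mul_le_Lp_mul_Lq μ hpq hf.enorm hg.enorm

theorem IsBlock.lintegral_enorm_mul_le_morreyNorm {n : ℕ} {p q : ℝ} {b g : (Fin n → ℝ) → ℝ}
    (hb : IsBlock n p q b) (hq : 1 < q) (hg : Measurable g) :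
    ∫⁻ x, ‖b x * g x‖ₑ ≤ morreyNorm n p q g := by
  obtain ⟨hbm, a, s, hs, hsupp, hnorm⟩ := hb
  have hpq : (conjExp q).HolderConjugate q := (Real.HolderConjugate.conjExponent hq).symm
  have hsupp' : Function.support (fun x => ‖b x * g x‖ₑ) ⊆ cube n a s := fun x hx =>
    hsupp (left_ne_zero_of_mul (enorm_ne_zero.1 hx))
  calc ∫⁻ x, ‖b x * g x‖ₑ = ∫⁻ x in cube n a s, ‖b x * g x‖ₑ :=
        (setLIntegral_eq_of_support_subset hsupp').symm
    _ ≤ (∫⁻ x in cube n a s, ENNReal.ofReal (|b x| ^ conjExp q)) ^ (1 / conjExp q) *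
          (∫⁻ x in cube n a s, ENNReal.ofReal (|g x| ^ q)) ^ (1 / q) :=
        lintegral_enorm_mul_le_of_holderConjugate hpq hbm.aemeasurable hg.aemeasurable
    _ ≤ ENNReal.ofReal ((s ^ n) ^ (1 / p - 1 / q)) *
          (∫⁻ x in cube n a s, ENNReal.ofReal (|g x| ^ q)) ^ (1 / q) := by
        gcongr
        refine le_trans ?_ hnorm
        have : 0 ≤ 1 / conjExp q := one_div_nonneg.2 hpq.nonneg
        gcongr
        exact Measure.restrict_le_self
    _ ≤ morreyNorm n p q g := le_iSup₂_of_le a s (le_iSup_of_le hs le_rfl)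

namespace IsBlockRep

variable {n : ℕ} {p q : ℝ} {f g : (Fin n → ℝ) → ℝ} {l : ℕ → ℝ} {b : ℕ → (Fin n → ℝ) → ℝ}

theorem aemeasurable (h : IsBlockRep n p q f l b) : AEMeasurable f := by
  refine aemeasurable_of_tendsto_metrizable_ae atTop
    (f := fun N x => ∑ k ∈ Finset.range N, l k * b k x)
    (fun N => (Finset.measurable_sum _ fun k _ => (h.1 k).1.const_mul (l k)).aemeasurable) ?_
  filter_upwards [h.2.2] with x ⟨hsum, hfx⟩
  rw [hfx]
  exact hsum.hasSum.tendsto_sum_nat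

theorem enorm_le_tsum (h : IsBlockRep n p q f l b) :
    ∀ᵐ x, ‖f x‖ₑ ≤ ∑' k, ‖l k‖ₑ * ‖b k x‖ₑ := by
  filter_upwards [h.2.2] with x ⟨_, hfx⟩
  simpa only [hfx, enorm_mul] using enorm_tsum_le_tsum_enorm (f := fun k => l k * b k x)

theorem lintegral_enorm_mul_le (h : IsBlockRep n p q f l b) (hq : 1 < q) (hg : Measurable g) :
    ∫⁻ x, ‖f x * g x‖ₑ ≤ ENNReal.ofReal (∑' k, |l k|) * morreyNorm n p q g := by
  have hbg (k : ℕ) : Measurable fun x => ‖b k x * g x‖ₑ := ((h.1 k).1.mul hg).enorm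
  calc ∫⁻ x, ‖f x * g x‖ₑ ≤ ∫⁻ x, ∑' k, ‖l k‖ₑ * ‖b k x * g x‖ₑ := by
        refine lintegral_mono_ae ?_
        filter_upwards [h.enorm_le_tsum] with x hx
        simp_rw [enorm_mul, ← mul_assoc, ENNReal.tsum_mul_right]
        gcongr
    _ = ∑' k, ‖l k‖ₑ * ∫⁻ x, ‖b k x * g x‖ₑ := by
        rw [lintegral_tsum fun k => ((hbg k).const_mul _).aemeasurable]
        simp_rw [lintegral_const_mul _ (hbg _)]
    _ ≤ ∑' k, ‖l k‖ₑ * morreyNorm n p q g := by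
        gcongr with k
        exact (h.1 k).lintegral_enorm_mul_le_morreyNorm hq hg
    _ = ENNReal.ofReal (∑' k, |l k|) * morreyNorm n p q g := by
        rw [ENNReal.tsum_mul_right, ofReal_tsum_of_nonneg (fun _ => abs_nonneg _) h.2.1]
        simp_rw [Real.enorm_eq_ofReal_abs]

theorem integrable_mul (h : IsBlockRep n p q f l b) (hq : 1 < q) (hg : Measurable g)
    (hgM : morreyNorm n p q g < ⊤) : Integrable fun x => f x * g x :=
  ⟨(h.aemeasurable.mul hg.aemeasurable).aestronglyMeasurable,
    (h.lintegral_enorm_mul_le hq hg).trans_lt (mul_lt_top ofReal_lt_top hgM)⟩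

end IsBlockRep

theorem MemBlockSpace.lintegral_enorm_mul_le {n : ℕ} {p q : ℝ} {f g : (Fin n → ℝ) → ℝ}
    (hf : MemBlockSpace n p q f) (hq : 1 < q) (hg : Measurable g)
    (hgM : morreyNorm n p q g ≠ ⊤) :
    ∫⁻ x, ‖f x * g x‖ₑ ≤ blockNorm n p q f * morreyNorm n p q g := by
  obtain ⟨l, b, hrep⟩ := hf
  rcases eq_or_ne (morreyNorm n p q g) 0 with hM₀ | hM₀
  · simpa [hM₀] using hrep.lintegral_enorm_mul_le hq hg
  · simp_rw [blockNorm, ENNReal.iInf_mul_of_ne hM₀ hgM]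
    exact le_iInf fun l => le_iInf fun b => le_iInf fun h => h.lintegral_enorm_mul_le hq hg

theorem stmt6_general (n : ℕ) (p q : ℝ) (hq : 1 < q)
    (f g : (Fin n → ℝ) → ℝ) (hg : Measurable g)
    (hfB : MemBlockSpace n p q f) (hgM : morreyNorm n p q g < ⊤) :
    Integrable (fun x => f x * g x) ∧
    ENNReal.ofReal |∫ x, f x * g x| ≤ blockNorm n p q f * morreyNorm n p q g := by
  obtain ⟨l, b, hrep⟩ := hfB
  refine ⟨hrep.integrable_mul hq hg hgM, ?_⟩
  rw [← Real.enorm_eq_ofReal_abs]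
  exact (enorm_integral_le_lintegral_enorm _).trans
    (MemBlockSpace.lintegral_enorm_mul_le ⟨l, b, hrep⟩ hq hg hgM.ne)

/-- For 1 < q ≤ p, g ∈ M^p_q and f ∈ B^{p'}_{q'}, the product fg is
integrable and |∫ fg| ≤ ‖f‖_{B^{p'}_{q'}} ‖g‖_{M^p_q}. -/
theorem stmt6 (n : ℕ) (p q : ℝ) (hq : 1 < q) (hqp : q ≤ p)
    (f g : (Fin n → ℝ) → ℝ) (hg : Measurable g)
    (hfB : MemBlockSpace n p q f) (hgM : morreyNorm n p q g < ⊤) :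
    Integrable (fun x => f x * g x) ∧
    ENNReal.ofReal |∫ x, f x * g x| ≤ blockNorm n p q f * morreyNorm n p q g :=
  stmt6_general n p q hq f g hg hfB hgM
end

section
/- Let 1 < q < p < ∞ and n = 1. Define E := ∪_{k≥1} (k - 1 + k^{p/(p-q)}, k + k^{p/(p-q)}). Then χ_E ∈ M^p_q(ℝ), but χ_E does not lie in the closure in M^p_q(ℝ) of finite linear combinations of characteristic functions of sets of finite measure; hence M̃^p_q(ℝ) ⊊ M^p_q(ℝ). -/
/-! For `α = p/(p-q) ≥ 1` the map `t ↦ t^α` is superadditive, so the unit intervals of `E` are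
separated by gaps that grow with `k`, and a window of length `s ≥ 1` meets only `O(s^{1/α})` of
them. Since `(1/α)/q = 1/q - 1/p`, this exactly balances the Morrey weight `s^{1/p-1/q}`.
On the other hand, a finite simple function `g` vanishes off a set of finite measure, which
misses most of some far-out unit interval of `E`; there `|χ_E - g| = 1`, so `χ_E` stays at
Morrey distance at least `2^{-1/q}` from every such `g`. -/

open MeasureTheory ENNReal Set Filter

/-- The one-dimensional Morrey norm `‖f‖_{M^p_q}` on `ℝ`. -/
noncomputable def morreyNorm1 (p q : ℝ) (f : ℝ → ℝ) : ℝ≥0∞ :=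
  ⨆ (a : ℝ) (s : ℝ) (_ : 0 < s),
    ENNReal.ofReal (s ^ (1 / p - 1 / q)) *
      (∫⁻ x in Set.Ioo a (a + s), ENNReal.ofReal (|f x| ^ q)) ^ (1 / q)

/-- A finite linear combination of characteristic functions of measurable sets of
finite measure, on ℝ. -/
def IsFinSimple1 (g : ℝ → ℝ) : Prop :=
  ∃ (N : ℕ) (c : Fin N → ℝ) (A : Fin N → Set ℝ),
    (∀ i, MeasurableSet (A i) ∧ volume (A i) < ⊤) ∧
    g = fun x => ∑ i, c i * (A i).indicator (fun _ => (1 : ℝ)) x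

/-- Membership in M̃^p_q(ℝ): the closure in M^p_q(ℝ) of the finite simple functions. -/
def MemMorreyTilde1 (p q : ℝ) (f : ℝ → ℝ) : Prop :=
  Measurable f ∧ morreyNorm1 p q f < ⊤ ∧
    ∀ ε : ℝ, 0 < ε → ∃ g, IsFinSimple1 g ∧
      morreyNorm1 p q (fun x => f x - g x) ≤ ENNReal.ofReal ε

open Topology

section MorreyNorm

variable {p q : ℝ}

lemma setLIntegral_abs_indicator_one_rpow {E : Set ℝ} (hE : MeasurableSet E) (hq : 0 < q)
    (J : Set ℝ) :
    ∫⁻ x in J, ENNReal.ofReal (|E.indicator (fun _ => (1 : ℝ)) x| ^ q) = volume (E ∩ J) := by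
  have hfun : (fun x => ENNReal.ofReal (|E.indicator (fun _ => (1 : ℝ)) x| ^ q)) =
      E.indicator 1 := by
    funext x
    by_cases hx : x ∈ E <;> simp [hx, hq.ne']
  rw [hfun, lintegral_indicator_one hE, Measure.restrict_apply hE]

lemma morreyNorm1_indicator_one_le {E : Set ℝ} (hE : MeasurableSet E) (hq : 0 < q)
    {C : ℝ≥0∞} (h : ∀ a s : ℝ, 0 < s →
      ENNReal.ofReal (s ^ (1 / p - 1 / q)) * volume (E ∩ Ioo a (a + s)) ^ (1 / q) ≤ C) :
    morreyNorm1 p q (E.indicator fun _ => 1) ≤ C := by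
  refine iSup_le fun a => iSup_le fun s => iSup_le fun hs => ?_
  rw [setLIntegral_abs_indicator_one_rpow hE hq]
  exact h a s hs

lemma setLIntegral_Ioo_rpow_le_morreyNorm1 (f : ℝ → ℝ) (a : ℝ) :
    (∫⁻ x in Ioo a (a + 1), ENNReal.ofReal (|f x| ^ q)) ^ (1 / q) ≤ morreyNorm1 p q f := by
  refine le_trans (le_of_eq ?_) (le_iSup_of_le a (le_iSup_of_le 1 (le_iSup_of_le one_pos le_rfl)))
  simp

end MorreyNorm

section NotMemMorreyTilde

lemma IsFinSimple1.exists_eq_zero_off {g : ℝ → ℝ} (hg : IsFinSimple1 g) :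
    ∃ U : Set ℝ, MeasurableSet U ∧ volume U ≠ ⊤ ∧ ∀ x ∉ U, g x = 0 := by
  obtain ⟨N, c, A, hA, rfl⟩ := hg
  refine ⟨⋃ i, A i, .iUnion fun i => (hA i).1, ?_, fun x hx => Finset.sum_eq_zero fun i _ => ?_⟩
  · exact ((measure_iUnion_fintype_le _ _).trans_lt
      (ENNReal.sum_lt_top.2 fun i _ => (hA i).2)).ne
  · rw [indicator_of_notMem (fun hxA => hx (mem_iUnion.2 ⟨i, hxA⟩)), mul_zero]

lemma tendsto_volume_inter_Ici_atTop {U : Set ℝ} (hU : volume U ≠ ⊤) :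
    Tendsto (fun x : ℝ => volume (U ∩ Ici x)) atTop (𝓝 0) := by
  have hempty : (⋂ x : ℝ, Ici x) = ∅ :=
    eq_empty_of_forall_notMem fun x hx => absurd (mem_iInter.1 hx (x + 1)) (by simp)
  have h := tendsto_measure_iInter_atTop (μ := volume.restrict U)
    (fun x => measurableSet_Ici.nullMeasurableSet) antitone_Ici
    ⟨0, by
      rw [Measure.restrict_apply measurableSet_Ici]
      exact ne_top_of_le_ne_top hU (measure_mono inter_subset_right)⟩
  simpa [hempty, Function.comp_def, Measure.restrict_apply measurableSet_Ici, inter_comm] using h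

theorem not_memMorreyTilde1_indicator_one {q : ℝ} (p : ℝ) (hq : 0 < q) {E : Set ℝ}
    (hE : ∀ K : ℝ, ∃ a, K ≤ a ∧ Ioo a (a + 1) ⊆ E) :
    ¬ MemMorreyTilde1 p q (E.indicator fun _ => 1) := by
  rintro ⟨-, -, happrox⟩
  set c : ℝ≥0∞ := 2⁻¹ ^ (1 / q)
  have hc0 : c ≠ 0 := (ENNReal.rpow_pos (by norm_num) (by norm_num)).ne'
  have hctop : c ≠ ⊤ := ENNReal.rpow_ne_top_of_nonneg (by positivity) (by norm_num)
  obtain ⟨g, hg, hfg⟩ := happrox (c.toReal / 2) (half_pos (ENNReal.toReal_pos hc0 hctop))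
  obtain ⟨U, hUmeas, hU, hgU⟩ := hg.exists_eq_zero_off
  obtain ⟨K, hK⟩ := ((tendsto_volume_inter_Ici_atTop hU).eventually
    (ge_mem_nhds (by norm_num : (0 : ℝ≥0∞) < 2⁻¹))).exists
  obtain ⟨a, hKa, haE⟩ := hE K
  have hfar : Ioo a (a + 1) \ U = Ioo a (a + 1) \ (U ∩ Ici K) := by
    ext x
    simp only [Set.mem_sdiff, mem_inter_iff, mem_Ici, mem_Ioo, not_and]
    constructor
    · exact fun h => ⟨h.1, fun hxU => absurd hxU h.2⟩
    · exact fun h => ⟨h.1, fun hxU => h.2 hxU (by linarith [h.1.1])⟩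
  have hhalf : 2⁻¹ ≤ volume (Ioo a (a + 1) \ U) := by
    rw [hfar, ← ENNReal.one_sub_inv_two]
    refine le_trans ?_ le_measure_sdiff
    simpa using tsub_le_tsub_left hK 1
  have hdiff : ∀ x ∈ Ioo a (a + 1) \ U,
      ENNReal.ofReal (|(E.indicator (fun _ => (1 : ℝ)) x - g x)| ^ q) = 1 := by
    rintro x ⟨hxI, hxU⟩
    simp [indicator_of_mem (haE hxI), hgU x hxU]
  have hlow : c ≤ morreyNorm1 p q (fun x => E.indicator (fun _ => (1 : ℝ)) x - g x) :=
    calc c ≤ volume (Ioo a (a + 1) \ U) ^ (1 / q) := ENNReal.rpow_le_rpow hhalf (by positivity)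
      _ = (∫⁻ x in Ioo a (a + 1) \ U,
            ENNReal.ofReal (|E.indicator (fun _ => (1 : ℝ)) x - g x| ^ q)) ^ (1 / q) := by
          rw [setLIntegral_congr_fun (measurableSet_Ioo.diff hUmeas) hdiff, setLIntegral_one]
      _ ≤ (∫⁻ x in Ioo a (a + 1),
            ENNReal.ofReal (|E.indicator (fun _ => (1 : ℝ)) x - g x| ^ q)) ^ (1 / q) := by
          gcongr
          exact sdiff_subset
      _ ≤ _ := setLIntegral_Ioo_rpow_le_morreyNorm1 _ a
  have hupper : ENNReal.ofReal (c.toReal / 2) = c / 2 := by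
    rw [ENNReal.ofReal_div_of_pos two_pos, ENNReal.ofReal_toReal hctop, ENNReal.ofReal_ofNat]
  exact (ENNReal.half_lt_self hc0 hctop).not_ge (hupper ▸ hlow.trans hfg)

end NotMemMorreyTilde

section SparseIntervals

/-- The paper's `k`-th interval `(k - 1 + k^α, k + k^α)` is indexed here by `k - 1 : ℕ`. -/
def sparseInterval (α : ℝ) (k : ℕ) : Set ℝ :=
  Ioo (((k : ℝ) + 1) - 1 + ((k : ℝ) + 1) ^ α) (((k : ℝ) + 1) + ((k : ℝ) + 1) ^ α)

def sparseSet (α : ℝ) : Set ℝ := ⋃ k : ℕ, sparseInterval α k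

variable {α : ℝ}

lemma volume_sparseInterval (α : ℝ) (k : ℕ) : volume (sparseInterval α k) = 1 := by
  rw [sparseInterval, Real.volume_Ioo]
  ring_nf
  exact ENNReal.ofReal_one

lemma measurableSet_sparseSet (α : ℝ) : MeasurableSet (sparseSet α) :=
  .iUnion fun _ => measurableSet_Ioo

lemma exists_Ioo_subset_sparseSet (α : ℝ) (K : ℝ) :
    ∃ a, K ≤ a ∧ Ioo a (a + 1) ⊆ sparseSet α := by
  set k := ⌈K⌉₊
  have hpow : 0 < ((k : ℝ) + 1) ^ α := Real.rpow_pos_of_pos (by positivity) α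
  refine ⟨((k : ℝ) + 1) - 1 + ((k : ℝ) + 1) ^ α, by linarith [Nat.le_ceil K], fun x hx => ?_⟩
  exact mem_iUnion.2 ⟨k, hx.1, by linarith [hx.2]⟩

lemma natCast_sub_rpow_lt_of_mem_sparseInterval (hα : 1 ≤ α) {k m : ℕ} (hkm : k < m)
    {x y : ℝ} (hx : x ∈ sparseInterval α k) (hy : y ∈ sparseInterval α m) :
    ((m : ℝ) - k) ^ α < y - x := by
  have hkm' : (k : ℝ) + 1 ≤ m := by exact_mod_cast hkm
  have hsuper := Real.add_rpow_le_rpow_add (by linarith : (0 : ℝ) ≤ (m : ℝ) - k)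
    (by positivity : (0 : ℝ) ≤ (k : ℝ) + 1) hα
  rw [show (m : ℝ) - k + ((k : ℝ) + 1) = (m : ℝ) + 1 by ring] at hsuper
  linarith [hx.2, hy.1]

lemma natCast_sub_lt_of_mem_sparseInterval (hα : 1 ≤ α) {k m : ℕ} (hkm : k < m)
    {x y s : ℝ} (hx : x ∈ sparseInterval α k) (hy : y ∈ sparseInterval α m) (hxy : y - x < s) :
    (m : ℝ) - k < s ^ α⁻¹ := by
  have hmk : (0 : ℝ) ≤ (m : ℝ) - k := sub_nonneg.2 (by exact_mod_cast hkm.le)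
  have hlt := (natCast_sub_rpow_lt_of_mem_sparseInterval hα hkm hx hy).trans hxy
  have hα0 : 0 < α := zero_lt_one.trans_le hα
  calc (m : ℝ) - k = (((m : ℝ) - k) ^ α) ^ α⁻¹ := (Real.rpow_rpow_inv hmk hα0.ne').symm
    _ < s ^ α⁻¹ := Real.rpow_lt_rpow (by positivity) hlt (inv_pos.2 hα0)

/-- A window of length `s` meets at most `2 ⌈s ^ α⁻¹⌉ + 1` of the intervals. -/
lemma volume_sparseSet_inter_Ioo_le (hα : 1 ≤ α) (a : ℝ) {s : ℝ} (hs : 0 < s) :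
    volume (sparseSet α ∩ Ioo a (a + s)) ≤ ENNReal.ofReal (2 * s ^ α⁻¹ + 3) := by
  rcases (sparseSet α ∩ Ioo a (a + s)).eq_empty_or_nonempty with hempty | ⟨x₀, hx₀, hx₀W⟩
  · simp [hempty]
  obtain ⟨k₀, hk₀⟩ := mem_iUnion.1 hx₀
  set n := ⌈s ^ α⁻¹⌉₊
  have hn : s ^ α⁻¹ ≤ n := Nat.le_ceil _
  have hnear : ∀ k x, x ∈ sparseInterval α k → x ∈ Ioo a (a + s) →
      k ∈ Finset.Ico (k₀ - n) (k₀ + n + 1) := by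
    intro k x hx hxW
    rcases lt_trichotomy k k₀ with hlt | rfl | hgt
    · have hdist := natCast_sub_lt_of_mem_sparseInterval (s := s) hα hlt hx hk₀
        (by linarith [hx₀W.2, hxW.1])
      have hk : k₀ < k + n := by exact_mod_cast (by linarith : (k₀ : ℝ) < k + n)
      exact Finset.mem_Ico.2 ⟨by omega, by omega⟩
    · exact Finset.mem_Ico.2 ⟨by omega, by omega⟩
    · have hdist := natCast_sub_lt_of_mem_sparseInterval (s := s) hα hgt hk₀ hx
        (by linarith [hxW.2, hx₀W.1])
      have hk : k < k₀ + n := by exact_mod_cast (by linarith : (k : ℝ) < k₀ + n)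
      exact Finset.mem_Ico.2 ⟨by omega, by omega⟩
  calc volume (sparseSet α ∩ Ioo a (a + s))
      ≤ volume (⋃ k ∈ Finset.Ico (k₀ - n) (k₀ + n + 1), sparseInterval α k) := by
        refine measure_mono fun x ⟨hx, hxW⟩ => ?_
        obtain ⟨k, hk⟩ := mem_iUnion.1 hx
        exact mem_biUnion (hnear k x hk hxW) hk
    _ ≤ ∑ k ∈ Finset.Ico (k₀ - n) (k₀ + n + 1), volume (sparseInterval α k) :=
        measure_biUnion_finset_le _ _
    _ ≤ ((2 * n + 1 : ℕ) : ℝ≥0∞) := by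
        simp only [volume_sparseInterval, Finset.sum_const, nsmul_eq_mul, mul_one, Nat.card_Ico]
        exact_mod_cast (by omega : k₀ + n + 1 - (k₀ - n) ≤ 2 * n + 1)
    _ ≤ ENNReal.ofReal (2 * s ^ α⁻¹ + 3) := by
        rw [← ENNReal.ofReal_natCast]
        refine ENNReal.ofReal_le_ofReal ?_
        push_cast
        linarith [Nat.ceil_lt_add_one (Real.rpow_nonneg hs.le α⁻¹)]

end SparseIntervals

section MorreyNormSparseSet

variable {p q : ℝ}

lemma rpow_mul_rpow_inv_rpow_eq_one (hq : 0 < q) (hqp : q < p) {s : ℝ} (hs : 0 < s) :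
    s ^ (1 / p - 1 / q) * (s ^ (p / (p - q))⁻¹) ^ (1 / q) = 1 := by
  have hp : 0 < p := hq.trans hqp
  have hpq : p - q ≠ 0 := (sub_pos.2 hqp).ne'
  rw [← Real.rpow_mul hs.le, ← Real.rpow_add hs, inv_div]
  convert Real.rpow_zero s using 2
  field_simp
  ring

lemma ofReal_rpow_mul_volume_sparseSet_inter_Ioo_le (hq : 0 < q) (hqp : q < p) (a : ℝ)
    {s : ℝ} (hs : 0 < s) :
    ENNReal.ofReal (s ^ (1 / p - 1 / q)) *
        volume (sparseSet (p / (p - q)) ∩ Ioo a (a + s)) ^ (1 / q) ≤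
      ENNReal.ofReal (5 ^ (1 / q)) := by
  have hp : 0 < p := hq.trans hqp
  have hα : 1 ≤ p / (p - q) := by
    rw [le_div_iff₀ (sub_pos.2 hqp)]
    linarith
  obtain ⟨B, hB0, hvol, hB⟩ : ∃ B : ℝ, 0 ≤ B ∧
      volume (sparseSet (p / (p - q)) ∩ Ioo a (a + s)) ≤ ENNReal.ofReal B ∧
      s ^ (1 / p - 1 / q) * B ^ (1 / q) ≤ 5 ^ (1 / q) := by
    rcases le_or_gt s 1 with hs1 | hs1
    · refine ⟨s, hs.le, ?_, ?_⟩
      · refine (measure_mono inter_subset_right).trans (le_of_eq ?_)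
        rw [Real.volume_Ioo, add_sub_cancel_left]
      · rw [← Real.rpow_add hs, sub_add_cancel]
        exact (Real.rpow_le_one hs.le hs1 (one_div_pos.2 hp).le).trans
          (Real.one_le_rpow (by norm_num) (one_div_pos.2 hq).le)
    · have hpow : 1 ≤ s ^ (p / (p - q))⁻¹ :=
        Real.one_le_rpow hs1.le (inv_nonneg.2 (zero_le_one.trans hα))
      refine ⟨5 * s ^ (p / (p - q))⁻¹, by positivity, ?_, le_of_eq ?_⟩
      · exact (volume_sparseSet_inter_Ioo_le hα a hs).trans
          (ENNReal.ofReal_le_ofReal (by linarith))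
      · rw [Real.mul_rpow (by norm_num) (by positivity), mul_left_comm,
          rpow_mul_rpow_inv_rpow_eq_one hq hqp hs, mul_one]
  calc ENNReal.ofReal (s ^ (1 / p - 1 / q)) *
        volume (sparseSet (p / (p - q)) ∩ Ioo a (a + s)) ^ (1 / q)
      ≤ ENNReal.ofReal (s ^ (1 / p - 1 / q)) * ENNReal.ofReal B ^ (1 / q) := by
        gcongr
    _ = ENNReal.ofReal (s ^ (1 / p - 1 / q) * B ^ (1 / q)) := by
        rw [ENNReal.ofReal_rpow_of_nonneg hB0 (by positivity),
          ENNReal.ofReal_mul (Real.rpow_nonneg hs.le _)]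
    _ ≤ ENNReal.ofReal (5 ^ (1 / q)) := ENNReal.ofReal_le_ofReal hB

lemma morreyNorm1_indicator_sparseSet_lt_top (hq : 0 < q) (hqp : q < p) :
    morreyNorm1 p q ((sparseSet (p / (p - q))).indicator fun _ => 1) < ⊤ :=
  (morreyNorm1_indicator_one_le (measurableSet_sparseSet _) hq fun a _ hs =>
    ofReal_rpow_mul_volume_sparseSet_inter_Ioo_le hq hqp a hs).trans_lt ENNReal.ofReal_lt_top

end MorreyNormSparseSet

/-- with E = ∪_{k≥1} (k-1+k^{p/(p-q)}, k+k^{p/(p-q)}), the function χ_E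
belongs to M^p_q(ℝ) but not to M̃^p_q(ℝ); hence M̃^p_q(ℝ) ⊊ M^p_q(ℝ). -/
theorem stmt16 (p q : ℝ) (hq : 1 < q) (hqp : q < p) :
    morreyNorm1 p q
      ((⋃ k : ℕ, Set.Ioo (((k : ℝ) + 1) - 1 + ((k : ℝ) + 1) ^ (p / (p - q)))
        (((k : ℝ) + 1) + ((k : ℝ) + 1) ^ (p / (p - q)))).indicator
        fun _ => (1 : ℝ)) < ⊤ ∧
    ¬ MemMorreyTilde1 p q
      ((⋃ k : ℕ, Set.Ioo (((k : ℝ) + 1) - 1 + ((k : ℝ) + 1) ^ (p / (p - q)))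
        (((k : ℝ) + 1) + ((k : ℝ) + 1) ^ (p / (p - q)))).indicator
        fun _ => (1 : ℝ)) := by
  have hq₀ : 0 < q := zero_lt_one.trans hq
  exact ⟨morreyNorm1_indicator_sparseSet_lt_top hq₀ hqp,
    not_memMorreyTilde1_indicator_one p hq₀ (exists_Ioo_subset_sparseSet _)⟩
end

section
/- Let 1 < q < p < ∞. There exists a nonzero bounded linear functional L on M^p_q(ℝ) that vanishes on every compactly supported function in M^p_q(ℝ); in particular L is not represented by integration against any function g ∈ L^{p'}(ℝ) (the only candidate g would be 0 a.e.). -/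
open MeasureTheory ENNReal Set Filter

/-- Membership in the Morrey space M^p_q(ℝ). -/
def MemMorrey1 (p q : ℝ) (f : ℝ → ℝ) : Prop :=
  Measurable f ∧ morreyNorm1 p q f < ⊤

/-!
Fix a free ultrafilter `U` on `ℕ` and the unit windows `I_k = (k ^ α, k ^ α + 1)` with
`α = p / (p - q)`. On an interval of length one Hölder gives `|∫_{I_k} f| ≤ ‖f‖_{M^p_q}`, so
`L f = lim_U ∫_{I_k} f` is a bounded linear functional, and it kills compactly supported functions
because the windows escape to infinity. But `L` is `1` on the indicator of `⋃ I_k`, which lies in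
`M^p_q`: an interval of length `s ≥ 1` meets at most `3 s ^ (1/α)` windows, and
`s ^ (1/p - 1/q) * (s ^ (1/α)) ^ (1/q) = 1`.
-/

open scoped Topology

lemma le_morreyNorm1 (p q : ℝ) (f : ℝ → ℝ) (a : ℝ) {s : ℝ} (hs : 0 < s) :
    ENNReal.ofReal (s ^ (1 / p - 1 / q)) *
      (∫⁻ x in Ioo a (a + s), ENNReal.ofReal (|f x| ^ q)) ^ (1 / q) ≤ morreyNorm1 p q f :=
  le_iSup_of_le a (le_iSup_of_le s (le_iSup_of_le hs le_rfl))

/-- Hölder on a window of length one, where the Morrey weight `s ^ (1/p - 1/q)` equals `1`. -/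
lemma setLIntegral_Ioo_enorm_le_morreyNorm1 (p : ℝ) {q : ℝ} (hq : 1 < q) {f : ℝ → ℝ}
    (hf : Measurable f) (a : ℝ) :
    ∫⁻ x in Ioo a (a + 1), ‖f x‖ₑ ≤ morreyNorm1 p q f := by
  have hconj : q.HolderConjugate (q / (q - 1)) :=
    (Real.holderConjugate_iff_eq_conjExponent hq).mpr rfl
  have holder := ENNReal.lintegral_mul_le_Lp_mul_Lq (volume.restrict (Ioo a (a + 1))) hconj
    hf.enorm.aemeasurable (aemeasurable_const (b := (1 : ℝ≥0∞)))
  have hvol : volume.restrict (Ioo a (a + 1)) univ = 1 := by simp [Real.volume_Ioo]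
  simp only [Pi.mul_apply, mul_one, ENNReal.one_rpow, lintegral_const, hvol] at holder
  have hpow (x : ℝ) : ‖f x‖ₑ ^ q = ENNReal.ofReal (|f x| ^ q) := by
    rw [Real.enorm_eq_ofReal_abs, ENNReal.ofReal_rpow_of_nonneg (abs_nonneg _) (by linarith)]
  have hwindow := le_morreyNorm1 p q f a one_pos
  rw [Real.one_rpow, ENNReal.ofReal_one, one_mul] at hwindow
  simp only [hpow] at holder
  exact holder.trans hwindow

lemma MemMorrey1.integrableOn_Ioo {p q : ℝ} (hq : 1 < q) {f : ℝ → ℝ} (hf : MemMorrey1 p q f)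
    (a : ℝ) : IntegrableOn f (Ioo a (a + 1)) :=
  ⟨hf.1.aestronglyMeasurable,
    (setLIntegral_Ioo_enorm_le_morreyNorm1 p hq hf.1 a).trans_lt hf.2⟩

lemma MemMorrey1.abs_setIntegral_Ioo_le {p q : ℝ} (hq : 1 < q) {f : ℝ → ℝ}
    (hf : MemMorrey1 p q f) (a : ℝ) :
    |∫ x in Ioo a (a + 1), f x| ≤ (morreyNorm1 p q f).toReal := by
  rw [← Real.norm_eq_abs]
  refine (norm_integral_le_lintegral_norm f).trans (ENNReal.toReal_mono hf.2.ne ?_)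
  simpa only [ofReal_norm] using setLIntegral_Ioo_enorm_le_morreyNorm1 p hq hf.1 a

lemma tendsto_limUnder_of_abs_le {ι : Type*} (U : Ultrafilter ι) {u : ι → ℝ} {B : ℝ}
    (hu : ∀ i, |u i| ≤ B) : Tendsto u U (𝓝 (limUnder (U : Filter ι) u)) := by
  obtain ⟨x, -, hx⟩ := (isCompact_Icc (a := -B) (b := B)).ultrafilter_le_nhds (U.map u)
    (le_principal_iff.mpr (mem_map.mpr (univ_mem' fun i => abs_le.mp (hu i))))
  exact tendsto_nhds_limUnder ⟨x, hx⟩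

/-- A translate of the paper's `I_k = (k - 1 + k ^ α, k + k ^ α)`. -/
def morreyWindow (α : ℝ) (k : ℕ) : Set ℝ := Ioo ((k : ℝ) ^ α) ((k : ℝ) ^ α + 1)

lemma measurableSet_morreyWindow (α : ℝ) (k : ℕ) : MeasurableSet (morreyWindow α k) :=
  measurableSet_Ioo

noncomputable def windowIntegral (α : ℝ) (f : ℝ → ℝ) (k : ℕ) : ℝ :=
  ∫ x in morreyWindow α k, f x

/-- The ultrafilter limit stands in for a Hahn–Banach extension of `f ↦ lim_k ∫_{I_k} f`. -/
noncomputable def windowLimit (α : ℝ) (U : Ultrafilter ℕ) (f : ℝ → ℝ) : ℝ :=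
  limUnder (U : Filter ℕ) (windowIntegral α f)

section windowLimit

variable {p q α : ℝ} {U : Ultrafilter ℕ} {f g : ℝ → ℝ}

lemma MemMorrey1.tendsto_windowIntegral (hq : 1 < q) (hf : MemMorrey1 p q f) :
    Tendsto (windowIntegral α f) U (𝓝 (windowLimit α U f)) :=
  tendsto_limUnder_of_abs_le U fun _ => hf.abs_setIntegral_Ioo_le hq _

lemma MemMorrey1.abs_windowLimit_le (hq : 1 < q) (hf : MemMorrey1 p q f) :
    |windowLimit α U f| ≤ (morreyNorm1 p q f).toReal :=
  le_of_tendsto' (hf.tendsto_windowIntegral hq).abs fun _ => hf.abs_setIntegral_Ioo_le hq _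

lemma windowLimit_add (hq : 1 < q) (hf : MemMorrey1 p q f) (hg : MemMorrey1 p q g) :
    windowLimit α U (f + g) = windowLimit α U f + windowLimit α U g := by
  have hsum : windowIntegral α (f + g) = windowIntegral α f + windowIntegral α g :=
    funext fun _ => integral_add (hf.integrableOn_Ioo hq _) (hg.integrableOn_Ioo hq _)
  rw [windowLimit, hsum]
  exact ((hf.tendsto_windowIntegral hq).add (hg.tendsto_windowIntegral hq)).limUnder_eq

lemma windowLimit_smul (hq : 1 < q) (hf : MemMorrey1 p q f) (c : ℝ) :
    windowLimit α U (c • f) = c * windowLimit α U f := by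
  have hsmul : windowIntegral α (c • f) = c • windowIntegral α f :=
    funext fun _ => integral_const_mul c _
  rw [windowLimit, hsmul]
  exact ((hf.tendsto_windowIntegral hq).const_mul c).limUnder_eq

lemma windowLimit_eq_zero_of_hasCompactSupport (hα : 0 < α) (hU : (U : Filter ℕ) ≤ atTop)
    (hf : HasCompactSupport f) : windowLimit α U f = 0 := by
  obtain ⟨R, hR⟩ := hf.isCompact.bddAbove
  have hfar : ∀ᶠ k : ℕ in atTop, R < (k : ℝ) ^ α :=
    ((tendsto_rpow_atTop hα).comp tendsto_natCast_atTop_atTop).eventually_gt_atTop R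
  have hzero : ∀ᶠ k in atTop, windowIntegral α f k = 0 := by
    filter_upwards [hfar] with k hk
    refine setIntegral_eq_zero_of_forall_eq_zero fun x hx => image_eq_zero_of_notMem_tsupport ?_
    exact fun hsupp => (hk.trans hx.1).not_ge (hR hsupp)
  exact (tendsto_const_nhds.congr' (EventuallyEq.symm (hU hzero))).limUnder_eq

lemma windowLimit_indicator_iUnion_morreyWindow :
    windowLimit α U ((⋃ k, morreyWindow α k).indicator 1) = 1 := by
  have hone (k : ℕ) : windowIntegral α ((⋃ k, morreyWindow α k).indicator 1) k = 1 := by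
    rw [windowIntegral, setIntegral_congr_fun (measurableSet_morreyWindow α k)
      fun x hx => indicator_of_mem (mem_iUnion_of_mem k hx) 1]
    simp [morreyWindow]
  rw [windowLimit, funext hone]
  exact tendsto_const_nhds.limUnder_eq

end windowLimit

lemma morreyNorm1_indicator_one {p q : ℝ} (hq : 0 < q) {S : Set ℝ} (hS : MeasurableSet S) :
    morreyNorm1 p q (S.indicator 1) = ⨆ (a : ℝ) (s : ℝ) (_ : 0 < s),
      ENNReal.ofReal (s ^ (1 / p - 1 / q)) * volume (S ∩ Ioo a (a + s)) ^ (1 / q) := by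
  have hpow : (fun x => ENNReal.ofReal (|S.indicator 1 x| ^ q)) = S.indicator 1 := by
    funext x
    by_cases hx : x ∈ S <;> simp [hx, Real.zero_rpow hq.ne']
  simp only [morreyNorm1, hpow, lintegral_indicator_one hS, Measure.restrict_apply hS]

lemma morreyNorm1_indicator_one_le_s17 {p q C : ℝ} (hp : 0 < p) (hq : 0 < q) (hC : 1 ≤ C)
    {S : Set ℝ} (hS : MeasurableSet S)
    (hsparse : ∀ a s, 1 < s → volume (S ∩ Ioo a (a + s)) ≤ ENNReal.ofReal (C * s ^ (1 - q / p))) :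
    morreyNorm1 p q (S.indicator 1) ≤ ENNReal.ofReal (C ^ (1 / q)) := by
  rw [morreyNorm1_indicator_one hq hS]
  refine iSup₂_le fun a s => iSup_le fun hs => ?_
  rcases le_or_gt s 1 with hs1 | hs1
  · have hvol : volume (S ∩ Ioo a (a + s)) ≤ ENNReal.ofReal s := by
      refine (measure_mono inter_subset_right).trans_eq ?_
      simp [Real.volume_Ioo]
    calc _ ≤ ENNReal.ofReal (s ^ (1 / p - 1 / q)) * ENNReal.ofReal s ^ (1 / q) := by gcongr
      _ = ENNReal.ofReal (s ^ (1 / p)) := by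
        rw [ENNReal.ofReal_rpow_of_pos hs, ← ENNReal.ofReal_mul (by positivity),
          ← Real.rpow_add hs, sub_add_cancel]
      _ ≤ ENNReal.ofReal (C ^ (1 / q)) := ofReal_le_ofReal
        ((Real.rpow_le_one hs.le hs1 (by positivity)).trans (Real.one_le_rpow hC (by positivity)))
  · have hexp : 1 / p - 1 / q + (1 - q / p) * (1 / q) = 0 := by field_simp; ring
    calc _ ≤ ENNReal.ofReal (s ^ (1 / p - 1 / q)) *
            ENNReal.ofReal (C * s ^ (1 - q / p)) ^ (1 / q) := by
          gcongr
          exact hsparse a s hs1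
      _ = ENNReal.ofReal (C ^ (1 / q) * s ^ (1 / p - 1 / q + (1 - q / p) * (1 / q))) := by
        rw [ENNReal.ofReal_rpow_of_nonneg (by positivity) (by positivity),
          ← ENNReal.ofReal_mul (by positivity), Real.mul_rpow (by linarith) (by positivity),
          ← Real.rpow_mul hs.le, Real.rpow_add hs]
        ring_nf
      _ = ENNReal.ofReal (C ^ (1 / q)) := by rw [hexp, Real.rpow_zero, mul_one]

lemma card_Icc_ceil_floor_le {x t : ℝ} (hx : 0 ≤ x) (ht : 0 ≤ t) :
    ((Finset.Icc ⌈x⌉₊ ⌊x + t⌋₊).card : ℝ) ≤ t + 1 := by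
  rw [Nat.card_Icc]
  rcases le_or_gt ⌈x⌉₊ (⌊x + t⌋₊ + 1) with hle | hgt
  · have hfloor : (⌊x + t⌋₊ : ℝ) ≤ x + t := Nat.floor_le (by positivity)
    have hceil : x ≤ ⌈x⌉₊ := Nat.le_ceil x
    push_cast [Nat.cast_sub hle]
    linarith
  · rw [Nat.sub_eq_zero_of_le hgt.le, Nat.cast_zero]
    linarith

lemma mem_Icc_of_mem_morreyWindow_inter_Ioo {α a s x : ℝ} (hα : 1 ≤ α) (hs : 0 < s) {k : ℕ}
    (hk : x ∈ morreyWindow α k) (hx : x ∈ Ioo a (a + s)) :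
    k ∈ Finset.Icc ⌈max (a - 1) 0 ^ α⁻¹⌉₊ ⌊max (a - 1) 0 ^ α⁻¹ + (s + 1) ^ α⁻¹⌋₊ := by
  set m := max (a - 1) 0
  have hm : 0 ≤ m := le_max_right _ _
  have hkα : 0 ≤ (k : ℝ) ^ α := by positivity
  have hroot : ((k : ℝ) ^ α) ^ α⁻¹ = k := Real.rpow_rpow_inv k.cast_nonneg (by linarith)
  have hβ : 0 ≤ α⁻¹ := by positivity
  refine Finset.mem_Icc.mpr ⟨Nat.ceil_le.mpr ?_, Nat.le_floor ?_⟩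
  · rw [← hroot]
    exact Real.rpow_le_rpow hm (max_le (by linarith [hk.2, hx.1]) hkα) hβ
  · calc (k : ℝ) = ((k : ℝ) ^ α) ^ α⁻¹ := hroot.symm
      _ ≤ (m + (s + 1)) ^ α⁻¹ :=
        Real.rpow_le_rpow hkα (by linarith [hk.1, hx.2, le_max_left (a - 1) 0]) hβ
      _ ≤ m ^ α⁻¹ + (s + 1) ^ α⁻¹ :=
        Real.rpow_add_le_add_rpow hm (by linarith) hβ (inv_le_one_of_one_le₀ hα)

/-- A window `k` meeting an interval of length `s` has `k ^ α` in an interval of length `s + 1`. -/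
lemma volume_iUnion_morreyWindow_inter_Ioo_le {α : ℝ} (hα : 1 ≤ α) (a : ℝ) {s : ℝ} (hs : 1 ≤ s) :
    volume ((⋃ k, morreyWindow α k) ∩ Ioo a (a + s)) ≤ ENNReal.ofReal (3 * s ^ α⁻¹) := by
  set m := max (a - 1) 0
  set F := Finset.Icc ⌈m ^ α⁻¹⌉₊ ⌊m ^ α⁻¹ + (s + 1) ^ α⁻¹⌋₊
  have hβ : 0 ≤ α⁻¹ := by positivity
  have hsub : (⋃ k, morreyWindow α k) ∩ Ioo a (a + s) ⊆ ⋃ k ∈ F, morreyWindow α k := by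
    rintro x ⟨hxS, hx⟩
    obtain ⟨k, hk⟩ := mem_iUnion.mp hxS
    exact mem_biUnion (mem_Icc_of_mem_morreyWindow_inter_Ioo hα (by linarith) hk hx) hk
  have hcount : (F.card : ℝ) ≤ 3 * s ^ α⁻¹ := by
    have hsβ : 1 ≤ s ^ α⁻¹ := Real.one_le_rpow hs hβ
    have hshift : (s + 1) ^ α⁻¹ ≤ s ^ α⁻¹ + 1 := by
      simpa using Real.rpow_add_le_add_rpow (by linarith) zero_le_one hβ (inv_le_one_of_one_le₀ hα)
    have hcard := card_Icc_ceil_floor_le (Real.rpow_nonneg (le_max_right (a - 1) 0) α⁻¹)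
      (Real.rpow_nonneg (by linarith : (0 : ℝ) ≤ s + 1) α⁻¹)
    linarith
  calc _ ≤ volume (⋃ k ∈ F, morreyWindow α k) := measure_mono hsub
    _ ≤ ∑ k ∈ F, volume (morreyWindow α k) := measure_biUnion_finset_le _ _
    _ = F.card := by simp [morreyWindow]
    _ ≤ ENNReal.ofReal (3 * s ^ α⁻¹) := by
      rw [← ENNReal.ofReal_natCast]
      exact ofReal_le_ofReal hcount

lemma memMorrey1_indicator_iUnion_morreyWindow {p q : ℝ} (hq : 0 < q) (hqp : q < p) :
    MemMorrey1 p q ((⋃ k, morreyWindow (p / (p - q)) k).indicator 1) := by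
  have hp : 0 < p := hq.trans hqp
  have hα : 1 ≤ p / (p - q) := (one_le_div (by linarith)).mpr (by linarith)
  have hinv : (p / (p - q))⁻¹ = 1 - q / p := by field_simp
  have hS : MeasurableSet (⋃ k, morreyWindow (p / (p - q)) k) :=
    MeasurableSet.iUnion (measurableSet_morreyWindow _)
  refine ⟨measurable_const.indicator hS, (morreyNorm1_indicator_one_le_s17 hp hq
    (by norm_num : (1 : ℝ) ≤ 3) hS fun a s hs => ?_).trans_lt ofReal_lt_top⟩
  simpa only [hinv] using volume_iUnion_morreyWindow_inter_Ioo_le hα a hs.le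

/-- for 1 < q < p there is a nonzero bounded linear functional on
M^p_q(ℝ) vanishing on every compactly supported member of M^p_q(ℝ). -/
theorem stmt17 (p q : ℝ) (hq : 1 < q) (hqp : q < p) :
    ∃ L : (ℝ → ℝ) → ℝ,
      (∀ f g, MemMorrey1 p q f → MemMorrey1 p q g → L (f + g) = L f + L g) ∧
      (∀ (c : ℝ) f, MemMorrey1 p q f → L (c • f) = c * L f) ∧
      (∃ C : ℝ, 0 ≤ C ∧ ∀ f, MemMorrey1 p q f →
        ENNReal.ofReal |L f| ≤ ENNReal.ofReal C * morreyNorm1 p q f) ∧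
      (∃ f, MemMorrey1 p q f ∧ L f ≠ 0) ∧
      (∀ f, MemMorrey1 p q f → HasCompactSupport f → L f = 0) := by
  set α := p / (p - q)
  have hα : 0 < α := div_pos (by linarith) (by linarith)
  let U : Ultrafilter ℕ := .of atTop
  refine ⟨windowLimit α U, fun f g hf hg => windowLimit_add hq hf hg,
    fun c f hf => windowLimit_smul hq hf c, ⟨1, zero_le_one, fun f hf => ?_⟩,
    ⟨_, memMorrey1_indicator_iUnion_morreyWindow (by linarith) hqp, ?_⟩,
    fun f _ hf => windowLimit_eq_zero_of_hasCompactSupport hα (Ultrafilter.of_le _) hf⟩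
  · rw [ENNReal.ofReal_one, one_mul]
    exact ofReal_le_of_le_toReal (hf.abs_windowLimit_le hq)
  · rw [windowLimit_indicator_iUnion_morreyWindow]
    exact one_ne_zero
end
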